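/- arXiv:2407.06921 — 2 statements merged into one kernel-verified Lean document; each statement's English description precedes it below -/
import Mathlib

section
/- Let F be a totally real number field, ℓ an odd prime unramified in F, f an odd positive integer, and β = √(ℓ)^f · ζ where ζ is a root of unity whose order is not divisible by ℓ and [F(β):F] = 2 with β totally imaginary and β̄ = √(ℓ)^f ζ^{-1} the conjugate of β over F. If ζ + ζ^{-1} ∈ F, then ζ + ζ^{-1} = 0, i.e., ζ = ±i and β = ±√(-ℓ)^f. -/
/-!
If `ζ + ζ⁻¹ ≠ 0` lay in `F`, then so would `√ℓ ^ f = (β + β̄) / (ζ + ζ⁻¹)`, hence (`f` odd) `√ℓ`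
itself. But if `ℓ = x ^ 2` with `x` integral, then every prime `P` of `F` above `ℓ` contains `x`,
so `ℓ ∈ P ^ 2` and `ℓ` ramifies in `F`, i.e. `ℓ ∣ disc F`. Thus `ζ + ζ⁻¹ = 0`, i.e. `ζ ^ 2 = -1`.
-/

open NumberField

namespace NumberField

theorem dvd_discr_of_sq_eq {K : Type*} [Field K] [NumberField K] {p : ℤ} (hp : Prime p)
    {x : 𝓞 K} (hx : x ^ 2 = p) : p ∣ discr K := by
  by_contra hunram
  have hpmax : (Ideal.span {p}).IsMaximal :=
    (Ideal.span_singleton_prime hp.ne_zero).mpr hp |>.isMaximal (by simpa using hp.ne_zero)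
  obtain ⟨P, hPmax, hPp⟩ :=
    Ideal.exists_maximal_ideal_liesOver_of_isIntegral (S := 𝓞 K) (Ideal.span {p})
  have hpP : (p : 𝓞 K) ∈ P := (Ideal.liesOver_span_iff hPmax.ne_top hp).mp hPp
  have hxP : x ∈ P := hPmax.isPrime.mem_of_pow_mem 2 (hx ▸ hpP)
  have hsq : (Ideal.span {p}).map (algebraMap ℤ (𝓞 K)) ≤ P ^ 2 := by
    rw [Ideal.map_span, Set.image_singleton, Ideal.span_le, Set.singleton_subset_iff,
      eq_intCast, ← hx]
    exact Ideal.pow_mem_pow hxP 2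
  have : Algebra.IsUnramifiedAt ℤ P :=
    (not_dvd_discr_iff_forall_mem K (𝓞 K) hp).mp hunram P hPmax.isPrime hpP
  have he : (Ideal.span {p}).ramificationIdx' P = 1 := by
    rw [Ideal.ramificationIdx'_eq_ramificationIdx _ _ (by simpa using hp.ne_zero)]
    exact P.ramificationIdx_eq_one ℤ
  exact (Ideal.ramificationIdx'_ne_one_iff (Ideal.map_le_of_le_comap hPp.over.le)).mpr hsq he


theorem dvd_discr_of_isSquare {K : Type*} [Field K] [NumberField K] {p : ℤ}
    (hp : Prime p) (h : IsSquare (p : K)) : p ∣ discr K := by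
  obtain ⟨y, hy⟩ := h
  have hint : IsIntegral ℤ y := .of_pow two_pos (by rw [sq, ← hy]; exact isIntegral_algebraMap)
  let x : 𝓞 K := ⟨y, hint⟩
  refine dvd_discr_of_sq_eq hp (x := x) (RingOfIntegers.ext ?_)
  push_cast
  exact (sq y).trans hy.symm

end NumberField

theorem Subfield.mem_of_odd_pow_mul_mem {K : Type*} [Field K] (S : Subfield K) {r c : K} {f : ℕ}
    (hf : Odd f) (hr : r ^ 2 ∈ S) (hc : c ∈ S) (hc0 : c ≠ 0) (h : r ^ f * c ∈ S) : r ∈ S := by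
  obtain ⟨k, rfl⟩ := hf
  rcases eq_or_ne r 0 with rfl | hr0
  · exact S.zero_mem
  have : r = r ^ (2 * k + 1) * c / ((r ^ 2) ^ k * c) := by field_simp; ring
  rw [this]
  exact S.div_mem h (S.mul_mem (S.pow_mem hr k) hc)

theorem Complex.eq_I_or_eq_neg_I_of_add_inv_eq_zero {z : ℂ} (hz : z ≠ 0) (h : z + z⁻¹ = 0) :
    z = I ∨ z = -I := by
  refine sq_eq_sq_iff_eq_or_eq_neg.mp ?_
  rw [I_sq]
  field_simp at h
  linear_combination h

theorem Complex.pow_mul_eq_I_mul_pow_or_eq_neg {z : ℂ} (hz : z = I ∨ z = -I) {f : ℕ} (hf : Odd f)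
    (r : ℂ) : r ^ f * z = (I * r) ^ f ∨ r ^ f * z = -(I * r) ^ f := by
  obtain ⟨k, rfl⟩ := hf
  have hI : (I * r) ^ (2 * k + 1) = (-1) ^ k * (I * r ^ (2 * k + 1)) := by
    rw [mul_pow, pow_succ, pow_mul, I_sq]; ring
  rcases hz with rfl | rfl <;> rcases neg_one_pow_eq_or ℂ k with hk | hk <;> rw [hk] at hI
  · exact .inl (by linear_combination -hI)
  · exact .inr (by linear_combination hI)
  · exact .inr (by linear_combination hI)
  · exact .inl (by linear_combination -hI)

theorem stmt_10_general (F : Type) [Field F] [NumberField F] [Algebra F ℂ]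
    (ℓ f : ℕ) (hl : ℓ.Prime)
    (hunram : ¬ ((ℓ : ℤ) ∣ NumberField.discr F)) (hf : Odd f)
    (ζ β : ℂ) (hroot : ∃ n : ℕ, 0 < n ∧ ¬ ℓ ∣ n ∧ ζ ^ n = 1)
    (hβ : β = ((Real.sqrt ℓ : ℝ) : ℂ) ^ f * ζ)
    (hconj : β + ((Real.sqrt ℓ : ℝ) : ℂ) ^ f * ζ⁻¹ ∈ Set.range (algebraMap F ℂ))
    (hζF : ζ + ζ⁻¹ ∈ Set.range (algebraMap F ℂ)) :
    ζ + ζ⁻¹ = 0 ∧ (ζ = Complex.I ∨ ζ = -Complex.I) ∧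
      (β = (Complex.I * ((Real.sqrt ℓ : ℝ) : ℂ)) ^ f ∨
        β = -(Complex.I * ((Real.sqrt ℓ : ℝ) : ℂ)) ^ f) := by
  set r : ℂ := ((Real.sqrt ℓ : ℝ) : ℂ)
  obtain ⟨n, hn, -, hζn⟩ := hroot
  have hζ0 : ζ ≠ 0 := by
    rintro rfl
    simp [hn.ne'] at hζn
  have hr2 : r ^ 2 = ℓ := by
    rw [← Complex.ofReal_pow, Real.sq_sqrt ℓ.cast_nonneg, Complex.ofReal_natCast]
  have hsum : β + r ^ f * ζ⁻¹ = r ^ f * (ζ + ζ⁻¹) := by rw [hβ]; ring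
  have hζsum : ζ + ζ⁻¹ = 0 := by
    by_contra hne
    obtain ⟨y, hy⟩ : r ∈ (algebraMap F ℂ).fieldRange :=
      Subfield.mem_of_odd_pow_mul_mem _ hf (hr2 ▸ natCast_mem _ ℓ) hζF hne (hsum ▸ hconj)
    refine hunram (dvd_discr_of_isSquare (Nat.prime_iff_prime_int.mp hl) ⟨y, ?_⟩)
    apply (algebraMap F ℂ).injective
    rw [map_mul, hy, ← sq, hr2, map_intCast, Int.cast_natCast]
  have hζI := Complex.eq_I_or_eq_neg_I_of_add_inv_eq_zero hζ0 hζsum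
  exact ⟨hζsum, hζI, hβ ▸ Complex.pow_mul_eq_I_mul_pow_or_eq_neg hζI hf r⟩

/-- Let `F` be a totally real number field, `ℓ` an odd prime unramified in `F`
(equivalently `ℓ ∤ disc F`), `f` odd, and `β = √ℓ^f · ζ` with `ζ` a root of unity
of order prime to `ℓ`, `[F(β):F] = 2`, `β` imaginary, and `β̄ = √ℓ^f ζ⁻¹` with
`β + β̄ ∈ F`.  If `ζ + ζ⁻¹ ∈ F` then `ζ + ζ⁻¹ = 0`, i.e. `ζ = ±i` and
`β = ±(√(-ℓ))^f`. -/
theorem stmt_10 (F : Type) [Field F] [NumberField F] [Algebra F ℂ]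
    (htr : ∀ ψ : F →+* ℂ, ∀ x : F, (ψ x).im = 0)
    (ℓ f : ℕ) (hl : ℓ.Prime) (hlodd : Odd ℓ)
    (hunram : ¬ ((ℓ : ℤ) ∣ NumberField.discr F)) (hf : Odd f)
    (ζ β : ℂ) (hroot : ∃ n : ℕ, 0 < n ∧ ¬ ℓ ∣ n ∧ ζ ^ n = 1)
    (hβ : β = ((Real.sqrt ℓ : ℝ) : ℂ) ^ f * ζ)
    (hdeg : (minpoly F β).natDegree = 2) (him : β.im ≠ 0)
    (hconj : β + ((Real.sqrt ℓ : ℝ) : ℂ) ^ f * ζ⁻¹ ∈ Set.range (algebraMap F ℂ))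
    (hζF : ζ + ζ⁻¹ ∈ Set.range (algebraMap F ℂ)) :
    ζ + ζ⁻¹ = 0 ∧ (ζ = Complex.I ∨ ζ = -Complex.I) ∧
      (β = (Complex.I * ((Real.sqrt ℓ : ℝ) : ℂ)) ^ f ∨
        β = -(Complex.I * ((Real.sqrt ℓ : ℝ) : ℂ)) ^ f) :=
  stmt_10_general F ℓ f hl hunram hf ζ β hroot hβ hconj hζF
end

section
/- Let F be a totally real number field, ℓ a prime with ℓ ∤ 2·disc(F/ℚ), f an odd positive integer, and β a totally imaginary algebraic number with [F(β):F] = 2 satisfying β·β̄ = ℓ^f where β̄ is the conjugate of β over F. Suppose (β^e + β̄^e)^2 = c·ℓ^{ef} for some positive integer e and some c ∈ {0, 1, 3, 4}. Then β/√(ℓ^f) is a root of unity ζ with ζ^{2n} = 1 for some n with [F(ζ^2):F] ≤ 2. -/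
/-!
Write `u = β^e`, `v = β̄^e`, so `u v = ℓ^{ef}` and `(u + v)^2 = c u v`. For `c = 0, 1, 3, 4` this
says `u/v` is a root of `t + 1`, `t^2 + t + 1`, `t^2 - t + 1`, `t - 1`, hence `u^6 = v^6`, so
`β^{12e} = (β β̄)^{6e} = ℓ^{6ef}` and `ζ = β/√(ℓ^f)` satisfies `ζ^{12e} = 1`. Moreover
`ζ^2 = β^2/ℓ^f` is a root of `X^2 - ((b^2 - 2ℓ^f)/ℓ^f) X + 1 ∈ F[X]`, the polynomial with roots
`β^2/ℓ^f` and `β̄^2/ℓ^f`.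
-/

theorem pow_six_eq_pow_six_of_sq_add_eq {R : Type*} [CommRing R] [NoZeroDivisors R]
    {u v c : R} (hc : c ∈ ({0, 1, 3, 4} : Set R)) (h : (u + v) ^ 2 = c * (u * v)) :
    u ^ 6 = v ^ 6 := by
  simp only [Set.mem_insert_iff, Set.mem_singleton_iff] at hc
  rcases hc with rfl | rfl | rfl | rfl
  · have h0 : u + v = 0 := pow_eq_zero_iff two_ne_zero |>.mp (by linear_combination h)
    rw [eq_neg_of_add_eq_zero_left h0]; ring
  · linear_combination (u - v) * (u ^ 3 + v ^ 3) * h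
  · linear_combination (u + v) * (u ^ 3 - v ^ 3) * h
  · have h0 : u - v = 0 := pow_eq_zero_iff two_ne_zero |>.mp (by linear_combination h)
    rw [sub_eq_zero.mp h0]

theorem sq_div_pow_eq_one_of_mul_eq {K : Type*} [Field K] {u v q : K} {k : ℕ}
    (hq : q ≠ 0) (huv : u * v = q) (hk : u ^ k = v ^ k) : (u ^ 2 / q) ^ k = 1 := by
  rw [div_pow, div_eq_one_iff_eq (pow_ne_zero k hq), ← huv, mul_pow, ← hk, ← pow_mul,
    mul_comm 2 k, pow_mul, sq]

open Polynomial in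
theorem natDegree_minpoly_le_two_of_sq_add {K A : Type*} [Field K] [Ring A] [Algebra K A]
    {x : A} (a b : K) (hx : x ^ 2 + algebraMap K A a * x + algebraMap K A b = 0) :
    (minpoly K x).natDegree ≤ 2 := by
  have hmonic : (X ^ 2 + C a * X + C b : K[X]).Monic := by monicity!
  have heval : aeval x (X ^ 2 + C a * X + C b : K[X]) = 0 := by
    simpa only [map_add, map_mul, map_pow, aeval_X, aeval_C] using hx
  calc (minpoly K x).natDegree ≤ (X ^ 2 + C a * X + C b : K[X]).natDegree :=
        natDegree_le_natDegree (minpoly.min K x hmonic heval)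
    _ ≤ 2 := by compute_degree

theorem natDegree_minpoly_sq_div_le_two {K A : Type*} [Field K] [Field A] [Algebra K A]
    {β : A} {b q : K} (hq : q ≠ 0) (hβ : β ^ 2 + algebraMap K A b * β + algebraMap K A q = 0) :
    (minpoly K (β ^ 2 / algebraMap K A q)).natDegree ≤ 2 := by
  refine natDegree_minpoly_le_two_of_sq_add (-(b ^ 2 - 2 * q) / q) 1 ?_
  have hq' : algebraMap K A q ≠ 0 := (map_ne_zero _).mpr hq
  simp only [map_div₀, map_neg, map_sub, map_mul, map_pow, map_ofNat, map_one]
  field_simp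
  linear_combination (β ^ 2 - algebraMap K A b * β + algebraMap K A q) * hβ

theorem div_ofReal_sqrt_sq (z : ℂ) {r : ℝ} (hr : 0 ≤ r) :
    (z / (Real.sqrt r : ℂ)) ^ 2 = z ^ 2 / r := by
  rw [div_pow, ← Complex.ofReal_pow, Real.sq_sqrt hr]

theorem stmt_11_general (F : Type) [Field F] [Algebra F ℂ]
    (ℓ f e : ℕ) (hl : ℓ.Prime)
    (he : 0 < e)
    (β βbar : ℂ) (b : F)
    (hroot : β ^ 2 + algebraMap F ℂ b * β + (ℓ : ℂ) ^ f = 0)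
    (hprod : β * βbar = (ℓ : ℂ) ^ f)
    (hc : ∃ c ∈ ({0, 1, 3, 4} : Set ℂ), (β ^ e + βbar ^ e) ^ 2 = c * (ℓ : ℂ) ^ (e * f)) :
    ∃ n : ℕ, 0 < n ∧ (β / ((Real.sqrt ((ℓ : ℝ) ^ f) : ℝ) : ℂ)) ^ (2 * n) = 1 ∧
      (minpoly F ((β / ((Real.sqrt ((ℓ : ℝ) ^ f) : ℝ) : ℂ)) ^ 2)).natDegree ≤ 2 := by
  obtain ⟨c, hc, hsum⟩ := hc
  have hq_map : algebraMap F ℂ ((ℓ : F) ^ f) = (ℓ : ℂ) ^ f := by simp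
  have hq : algebraMap F ℂ ((ℓ : F) ^ f) ≠ 0 := by
    rw [hq_map]; exact pow_ne_zero f (Nat.cast_ne_zero.mpr hl.ne_zero)
  have hζ : (β / ((Real.sqrt ((ℓ : ℝ) ^ f) : ℝ) : ℂ)) ^ 2 =
      β ^ 2 / algebraMap F ℂ ((ℓ : F) ^ f) := by
    rw [div_ofReal_sqrt_sq β (by positivity), hq_map]; push_cast; rfl
  have hpow_six : (β ^ e) ^ 6 = (βbar ^ e) ^ 6 :=
    pow_six_eq_pow_six_of_sq_add_eq hc (by rw [hsum, ← mul_pow, hprod, ← pow_mul, mul_comm f])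
  refine ⟨6 * e, by positivity, ?_, ?_⟩
  · rw [pow_mul, hζ]
    refine sq_div_pow_eq_one_of_mul_eq hq (hprod.trans hq_map.symm) ?_
    rw [mul_comm 6 e, pow_mul, pow_mul, hpow_six]
  · rw [hζ]
    exact natDegree_minpoly_sq_div_le_two (b := b) ((map_ne_zero _).mp hq) (by rwa [hq_map])

/-- Let `F` be a totally real number field, `ℓ` a prime with `ℓ ∤ 2·disc F`,
`f` odd, `β` imaginary with `[F(β):F] = 2` satisfying a quadratic
`X^2 + bX + ℓ^f` over `F` with conjugate `β̄`, so `β·β̄ = ℓ^f`.  If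
`(β^e + β̄^e)^2 = c·ℓ^{ef}` for some positive `e` and `c ∈ {0,1,3,4}`, then
`ζ := β/√(ℓ^f)` is a root of unity with `ζ^{2n} = 1` for some `n > 0`, and
`[F(ζ^2):F] ≤ 2`. -/
theorem stmt_11 (F : Type) [Field F] [NumberField F] [Algebra F ℂ]
    (htr : ∀ ψ : F →+* ℂ, ∀ x : F, (ψ x).im = 0)
    (ℓ f e : ℕ) (hl : ℓ.Prime)
    (hdisc : ¬ ((ℓ : ℤ) ∣ 2 * NumberField.discr F)) (hf : Odd f) (he : 0 < e)
    (β βbar : ℂ) (b : F)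
    (hroot : β ^ 2 + algebraMap F ℂ b * β + (ℓ : ℂ) ^ f = 0)
    (hroot' : βbar ^ 2 + algebraMap F ℂ b * βbar + (ℓ : ℂ) ^ f = 0)
    (hne : βbar ≠ β) (hprod : β * βbar = (ℓ : ℂ) ^ f)
    (him : β.im ≠ 0) (hnotF : β ∉ Set.range (algebraMap F ℂ))
    (hdeg : (minpoly F β).natDegree = 2)
    (hc : ∃ c ∈ ({0, 1, 3, 4} : Set ℂ), (β ^ e + βbar ^ e) ^ 2 = c * (ℓ : ℂ) ^ (e * f)) :
    ∃ n : ℕ, 0 < n ∧ (β / ((Real.sqrt ((ℓ : ℝ) ^ f) : ℝ) : ℂ)) ^ (2 * n) = 1 ∧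
      (minpoly F ((β / ((Real.sqrt ((ℓ : ℝ) ^ f) : ℝ) : ℂ)) ^ 2)).natDegree ≤ 2 :=
  stmt_11_general F ℓ f e hl he β βbar b hroot hprod hc
end
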